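/- arXiv:math/0608603 — 2 statements merged into one kernel-verified Lean document; each statement's English description precedes it below -/
import Mathlib

section
/- Let u be a recurrent infinite word and w a factor of u with a unique left extension a. Then R(aw) = a R(w) a^{-1} = { a v a^{-1} : v ∈ R(w) }, where a v a^{-1} denotes the word obtained from v by prepending the letter a and erasing the final letter a (every v ∈ R(w) ends with the letter a in this situation). -/
variable {A : Type*}

/-- The factor of `u` of length `n` starting at position `j`. -/
def factorAt (u : ℕ → A) (j n : ℕ) : List A :=
  (List.range n).map (fun i => u (j + i))

/-- `j` is an occurrence of the finite word `w` in `u`. -/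
def OccursAt (u : ℕ → A) (w : List A) (j : ℕ) : Prop :=
  factorAt u j w.length = w

/-- `w` is a factor of the infinite word `u`. -/
def IsFactor (u : ℕ → A) (w : List A) : Prop :=
  ∃ j, OccursAt u w j

/-- `v` is a return word of `w` in `u`: the word between two successive occurrences of `w`. -/
def IsReturnWord (u : ℕ → A) (w v : List A) : Prop :=
  ∃ j k, j < k ∧ OccursAt u w j ∧ OccursAt u w k ∧
    (∀ l, j < l → l < k → ¬ OccursAt u w l) ∧ v = factorAt u j (k - j)

/-- The set `R(w)` of return words of `w` in `u`. -/
def returnWords (u : ℕ → A) (w : List A) : Set (List A) :=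
  {v | IsReturnWord u w v}

/-- Property `R_m`: every factor of `u` has exactly `m` return words. -/
def PropertyR (u : ℕ → A) (m : ℕ) : Prop :=
  ∀ w, IsFactor u w → (returnWords u w).Finite ∧ (returnWords u w).ncard = m

/-- The set of left extensions of `w`. -/
def leftExt (u : ℕ → A) (w : List A) : Set A := {a | IsFactor u (a :: w)}

/-- The set of right extensions of `w`. -/
def rightExt (u : ℕ → A) (w : List A) : Set A := {b | IsFactor u (w ++ [b])}

def LeftSpecial (u : ℕ → A) (w : List A) : Prop := 2 ≤ (leftExt u w).ncard

def RightSpecial (u : ℕ → A) (w : List A) : Prop := 2 ≤ (rightExt u w).ncard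

/-- The set of pairs `(a, b)` such that `a w b` is a factor of `u`. -/
def extPairs (u : ℕ → A) (w : List A) : Set (A × A) :=
  {p | IsFactor u (p.1 :: (w ++ [p.2]))}

/-- The bilateral order `B(w)`. -/
noncomputable def bilateralOrder (u : ℕ → A) (w : List A) : ℤ :=
  ((extPairs u w).ncard : ℤ) - (leftExt u w).ncard - (rightExt u w).ncard + 1

/-- `w` is a weak bispecial factor of `u`. -/
def WeakBispecial (u : ℕ → A) (w : List A) : Prop :=
  IsFactor u w ∧ bilateralOrder u w < 0

/-- The factor complexity of `u`. -/
noncomputable def Complexity (u : ℕ → A) (n : ℕ) : ℕ :=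
  {w : List A | w.length = n ∧ IsFactor u w}.ncard

/-- `u` is recurrent: every factor occurs at least twice. -/
def Recurrent (u : ℕ → A) : Prop :=
  ∀ w, IsFactor u w → ∃ j k, j < k ∧ OccursAt u w j ∧ OccursAt u w k

/-- `u` is uniformly recurrent. -/
def UniformlyRecurrent (u : ℕ → A) : Prop :=
  ∀ n : ℕ, ∃ N : ℕ, ∀ w, IsFactor u w → w.length = N →
    ∀ v, IsFactor u v → v.length = n → v <:+: w

def EventuallyPeriodic (u : ℕ → A) : Prop :=
  ∃ p, 0 < p ∧ ∃ N, ∀ n, N ≤ n → u (n + p) = u n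

/-- `w` is a maximal right special factor. -/
def MaximalRightSpecial (u : ℕ → A) (w : List A) : Prop :=
  IsFactor u w ∧ RightSpecial u w ∧
    ∀ v, IsFactor u v → RightSpecial u v → w <:+ v → v = w

/-- The return word `v` of `w` starts with the letter `b`. -/
def StartsWithLetter (w v : List A) (b : A) : Prop := (w ++ [b]) <+: (v ++ w)

section ReturnWordHelpers

variable {u : ℕ → A} {w : List A} {a : A}

lemma factorAt_length (u : ℕ → A) (j n : ℕ) : (factorAt u j n).length = n := by
  simp [factorAt]

lemma factorAt_eq_iff {j j' n : ℕ} :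
    factorAt u j n = factorAt u j' n ↔ ∀ i < n, u (j + i) = u (j' + i) := by
  unfold factorAt
  rw [List.map_eq_map_iff]
  simp

lemma factorAt_succ (j n : ℕ) :
    factorAt u j (n + 1) = u j :: factorAt u (j + 1) n := by
  unfold factorAt
  rw [List.range_succ_eq_map, List.map_cons, List.map_map]
  refine congrArg₂ _ (by simp) (List.map_congr_left ?_)
  intro i _
  exact congrArg u (by omega)

lemma factorAt_concat (j n : ℕ) :
    factorAt u j (n + 1) = factorAt u j n ++ [u (j + n)] := by
  unfold factorAt
  rw [List.range_succ, List.map_append, List.map_singleton]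

lemma factorAt_dropLast (j n : ℕ) :
    (factorAt u j (n + 1)).dropLast = factorAt u j n := by
  rw [factorAt_concat]; simp

lemma factorAt_getLast? (j n : ℕ) :
    (factorAt u j (n + 1)).getLast? = some (u (j + n)) := by
  rw [factorAt_concat]; simp

lemma occursAt_cons {b : A} {j : ℕ} :
    OccursAt u (b :: w) j ↔ u j = b ∧ OccursAt u w (j + 1) := by
  unfold OccursAt
  rw [List.length_cons, factorAt_succ]
  simp

lemma occ_copy {m j N : ℕ} (hc : factorAt u m N = factorAt u j N) {i : ℕ}
    (h : OccursAt u w (j + i)) (hi : i + w.length ≤ N) : OccursAt u w (m + i) := by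
  unfold OccursAt at *
  have key : factorAt u (m + i) w.length = factorAt u (j + i) w.length := by
    rw [factorAt_eq_iff]
    intro l hl
    rw [factorAt_eq_iff] at hc
    have := hc (i + l) (by omega)
    rwa [← Nat.add_assoc, ← Nat.add_assoc] at this
  rw [key, h]

lemma factorAt_prefix_eq {m j N L : ℕ} (hc : factorAt u m N = factorAt u j N) (hL : L ≤ N) :
    factorAt u m L = factorAt u j L := by
  rw [factorAt_eq_iff] at hc ⊢
  intro i hi
  exact hc i (by omega)

lemma exists_occ_ge (hrec : Recurrent u) (hw : IsFactor u w) (N : ℕ) :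
    ∃ j, N ≤ j ∧ OccursAt u w j := by
  induction N with
  | zero => obtain ⟨j, hj⟩ := hw; exact ⟨j, Nat.zero_le _, hj⟩
  | succ N ih =>
    obtain ⟨j, hjN, hj⟩ := ih
    have hP : IsFactor u (factorAt u 0 (j + w.length)) :=
      ⟨0, by unfold OccursAt; rw [factorAt_length]⟩
    obtain ⟨j', k', hlt, _, hk'⟩ := hrec _ hP
    unfold OccursAt at hk'
    rw [factorAt_length] at hk'
    have hocc : OccursAt u w (k' + j) := by
      apply occ_copy hk' (by simpa using hj)
      omega
    exact ⟨k' + j, by omega, hocc⟩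

lemma u_pred_eq (ha : leftExt u w = {a}) {k : ℕ} (hk : OccursAt u w (k + 1)) : u k = a := by
  have hmem : u k ∈ leftExt u w := ⟨k, occursAt_cons.mpr ⟨rfl, hk⟩⟩
  rw [ha] at hmem
  exact hmem

lemma returnWord_rep (hrec : Recurrent u) {v : List A} (hv : IsReturnWord u w v) :
    ∃ j k, 1 ≤ j ∧ j < k ∧ OccursAt u w j ∧ OccursAt u w k ∧
      (∀ l, j < l → l < k → ¬ OccursAt u w l) ∧ v = factorAt u j (k - j) := by
  obtain ⟨j, k, hjk, hj, hk, hgap, hveq⟩ := hv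
  have hB : IsFactor u (factorAt u j ((k - j) + w.length)) :=
    ⟨j, by unfold OccursAt; rw [factorAt_length]⟩
  obtain ⟨m, hm1, hmo⟩ := exists_occ_ge hrec hB 1
  unfold OccursAt at hmo
  rw [factorAt_length] at hmo
  refine ⟨m, m + (k - j), hm1, by omega, ?_, ?_, ?_, ?_⟩
  · have h0 := occ_copy hmo (i := 0) (by simpa using hj) (by omega)
    simpa using h0
  · have hocc : OccursAt u w (j + (k - j)) := by
      rw [show j + (k - j) = k from by omega]
      exact hk
    exact occ_copy hmo hocc (by omega)
  · intro l hl1 hl2 hlo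
    have hl : l = m + (l - m) := by omega
    have hocc := occ_copy hmo.symm (i := l - m) (w := w) (by rw [← hl]; exact hlo) (by omega)
    exact hgap (j + (l - m)) (by omega) (by omega) hocc
  · rw [hveq, show m + (k - j) - m = k - j from by omega]
    exact (factorAt_prefix_eq hmo (by omega)).symm

end ReturnWordHelpers

/-- If `u` is recurrent and the factor `w` has a unique left extension `a`,
then every return word of `w` ends with the letter `a`, and
`R(aw) = a R(w) a⁻¹ = {a v a⁻¹ : v ∈ R(w)}`, where `a v a⁻¹` is obtained from `v` by
prepending `a` and erasing the final letter (which is `a`). -/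
theorem returnWords_of_unique_left_extension [Fintype A] (u : ℕ → A) (hrec : Recurrent u)
    (w : List A) (hw : IsFactor u w) (a : A) (ha : leftExt u w = {a}) :
    (∀ v ∈ returnWords u w, v.getLast? = some a) ∧
      returnWords u (a :: w) = (fun v => a :: v.dropLast) '' returnWords u w := by
  constructor
  · rintro v ⟨j, k, hjk, hj, hk, hgap, rfl⟩
    obtain ⟨d, hd⟩ : ∃ d, k - j = d + 1 := ⟨k - j - 1, by omega⟩
    rw [hd, factorAt_getLast?]
    congr 1
    apply u_pred_eq ha
    rw [show j + d + 1 = k from by omega]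
    exact hk
  · ext v
    constructor
    · rintro ⟨j, k, hjk, hj, hk, hgap, rfl⟩
      rw [occursAt_cons] at hj hk
      obtain ⟨d, hd⟩ : ∃ d, k - j = d + 1 := ⟨k - j - 1, by omega⟩
      refine ⟨factorAt u (j + 1) (k - j),
        ⟨j + 1, k + 1, by omega, hj.2, hk.2, ?_,
          by rw [show k + 1 - (j + 1) = k - j from by omega]⟩, ?_⟩
      · intro l hl1 hl2 hlo
        obtain ⟨l', rfl⟩ : ∃ l', l = l' + 1 := ⟨l - 1, by omega⟩
        have hla := u_pred_eq ha hlo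
        exact hgap l' (by omega) (by omega) (occursAt_cons.mpr ⟨hla, hlo⟩)
      · simp only
        rw [hd, factorAt_dropLast, factorAt_succ, hj.1]
    · rintro ⟨v', hv', rfl⟩
      obtain ⟨j, k, hj1, hjk, hj, hk, hgap, hveq⟩ := returnWord_rep hrec hv'
      obtain ⟨d, hd⟩ : ∃ d, k - j = d + 1 := ⟨k - j - 1, by omega⟩
      have haj : u (j - 1) = a := by
        apply u_pred_eq ha
        rw [show j - 1 + 1 = j from by omega]
        exact hj
      have hak : u (k - 1) = a := by
        apply u_pred_eq ha
        rw [show k - 1 + 1 = k from by omega]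
        exact hk
      refine ⟨j - 1, k - 1, by omega, ?_, ?_, ?_, ?_⟩
      · exact occursAt_cons.mpr ⟨haj, by rw [show j - 1 + 1 = j from by omega]; exact hj⟩
      · exact occursAt_cons.mpr ⟨hak, by rw [show k - 1 + 1 = k from by omega]; exact hk⟩
      · intro l hl1 hl2 hlo
        rw [occursAt_cons] at hlo
        exact hgap (l + 1) (by omega) (by omega) hlo.2
      · rw [hveq]
        show a :: (factorAt u j (k - j)).dropLast = factorAt u (j - 1) (k - 1 - (j - 1))
        rw [hd, factorAt_dropLast,
          show k - 1 - (j - 1) = d + 1 from by omega, factorAt_succ, haj,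
          show j - 1 + 1 = j from by omega]
end

section
/- If an infinite word u satisfies property R_m and no factor of u is weak bispecial, then ΔC(n) ≥ m − 1 for all n ≥ 0, where ΔC(n) = C(n+1) − C(n). -/
variable {A : Type*}

namespace DeltaAux

lemma factorAt_length (u : ℕ → A) (j n : ℕ) : (factorAt u j n).length = n := by
  simp [factorAt]

lemma factorAt_succ_right (u : ℕ → A) (j n : ℕ) :
    factorAt u j (n+1) = factorAt u j n ++ [u (j+n)] := by
  simp [factorAt, List.range_succ]

lemma factorAt_succ_left (u : ℕ → A) (j n : ℕ) :
    factorAt u j (n+1) = u j :: factorAt u (j+1) n := by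
  unfold factorAt
  rw [List.range_succ_eq_map, List.map_cons, List.map_map]
  refine congrArg₂ _ (by simp) ?_
  apply List.map_congr_left
  intro i hi
  show u (j + (i+1)) = u ((j+1) + i)
  congr 1
  omega

lemma occursAt_nil (u : ℕ → A) (j : ℕ) : OccursAt u ([] : List A) j := by
  simp [OccursAt, factorAt]

lemma occursAt_self (u : ℕ → A) (j n : ℕ) : OccursAt u (factorAt u j n) j := by
  simp [OccursAt, factorAt_length]

lemma occursAt_cons {u : ℕ → A} {w : List A} {a : A} {j : ℕ} :
    OccursAt u (a :: w) j ↔ u j = a ∧ OccursAt u w (j+1) := by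
  unfold OccursAt
  simp only [List.length_cons, factorAt_succ_left, List.cons_eq_cons]

section Counting

variable [Fintype A]

lemma factorSet_finite (u : ℕ → A) (n : ℕ) :
    {w : List A | w.length = n ∧ IsFactor u w}.Finite :=
  Set.Finite.subset (List.finite_length_eq A n) (fun _ hw => hw.1)

noncomputable def factorFinset (u : ℕ → A) (n : ℕ) : Finset (List A) :=
  (factorSet_finite u n).toFinset

lemma mem_factorFinset {u : ℕ → A} {n : ℕ} {w : List A} :
    w ∈ factorFinset u n ↔ w.length = n ∧ IsFactor u w := by
  simp [factorFinset, Set.Finite.mem_toFinset]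

lemma complexity_eq_card (u : ℕ → A) (n : ℕ) :
    Complexity u n = (factorFinset u n).card :=
  Set.ncard_eq_toFinset_card _ (factorSet_finite u n)

lemma card_right (u : ℕ → A) (n : ℕ) :
    Complexity u (n+1) = ∑ w ∈ factorFinset u n, (rightExt u w).ncard := by
  classical
  rw [complexity_eq_card]
  have key : factorFinset u (n+1) =
      (factorFinset u n).biUnion
        (fun w => ((rightExt u w).toFinite.toFinset).image (fun b => w ++ [b])) := by
    ext v
    simp only [mem_factorFinset, Finset.mem_biUnion, Finset.mem_image,
      Set.Finite.mem_toFinset]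
    constructor
    · rintro ⟨hlen, j, hj⟩
      have hv : v = factorAt u j n ++ [u (j+n)] := by
        rw [OccursAt, hlen, factorAt_succ_right] at hj
        exact hj.symm
      refine ⟨factorAt u j n, ⟨factorAt_length u j n, j, occursAt_self u j n⟩,
        u (j+n), ?_, hv.symm⟩
      show IsFactor u (factorAt u j n ++ [u (j+n)])
      rw [← hv]
      exact ⟨j, hj⟩
    · rintro ⟨w, hw, b, hb, rfl⟩
      exact ⟨by simp [hw.1], hb⟩
  rw [key, Finset.card_biUnion]
  · refine Finset.sum_congr rfl (fun w hw => ?_)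
    rw [Finset.card_image_of_injective _ (fun b c hbc => by simpa using hbc)]
    exact (Set.ncard_eq_toFinset_card _ (Set.toFinite _)).symm
  · intro w hw w' hw' hne
    simp only [Finset.disjoint_left, Finset.mem_image, Set.Finite.mem_toFinset]
    rintro v ⟨b, hb, rfl⟩ ⟨b', hb', he⟩
    have hl : w'.length = w.length := by
      rw [(mem_factorFinset.1 hw).1, (mem_factorFinset.1 hw').1]
    exact hne ((List.append_inj he hl).1.symm)

lemma card_left (u : ℕ → A) (n : ℕ) :
    Complexity u (n+1) = ∑ w ∈ factorFinset u n, (leftExt u w).ncard := by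
  classical
  rw [complexity_eq_card]
  have key : factorFinset u (n+1) =
      (factorFinset u n).biUnion
        (fun w => ((leftExt u w).toFinite.toFinset).image (fun a => a :: w)) := by
    ext v
    simp only [mem_factorFinset, Finset.mem_biUnion, Finset.mem_image,
      Set.Finite.mem_toFinset]
    constructor
    · rintro ⟨hlen, j, hj⟩
      have hv : v = u j :: factorAt u (j+1) n := by
        rw [OccursAt, hlen, factorAt_succ_left] at hj
        exact hj.symm
      refine ⟨factorAt u (j+1) n,
        ⟨factorAt_length u (j+1) n, j+1, occursAt_self u (j+1) n⟩,
        u j, ?_, hv.symm⟩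
      show IsFactor u (u j :: factorAt u (j+1) n)
      rw [← hv]
      exact ⟨j, hj⟩
    · rintro ⟨w, hw, a, ha, rfl⟩
      exact ⟨by simp [hw.1], ha⟩
  rw [key, Finset.card_biUnion]
  · refine Finset.sum_congr rfl (fun w hw => ?_)
    rw [Finset.card_image_of_injective _ (fun a c hac => by simpa using hac)]
    exact (Set.ncard_eq_toFinset_card _ (Set.toFinite _)).symm
  · intro w hw w' hw' hne
    simp only [Finset.disjoint_left, Finset.mem_image, Set.Finite.mem_toFinset]
    rintro v ⟨a, ha, rfl⟩ ⟨a', ha', he⟩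
    exact hne ((List.cons_eq_cons.1 he).2.symm)

lemma card_pairs (u : ℕ → A) (n : ℕ) :
    Complexity u (n+2) = ∑ w ∈ factorFinset u n, (extPairs u w).ncard := by
  classical
  rw [complexity_eq_card]
  have key : factorFinset u (n+2) =
      (factorFinset u n).biUnion
        (fun w => ((extPairs u w).toFinite.toFinset).image
          (fun p : A × A => p.1 :: (w ++ [p.2]))) := by
    ext v
    simp only [mem_factorFinset, Finset.mem_biUnion, Finset.mem_image,
      Set.Finite.mem_toFinset]
    constructor
    · rintro ⟨hlen, j, hj⟩
      have hv : v = u j :: (factorAt u (j+1) n ++ [u ((j+1)+n)]) := by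
        rw [OccursAt, hlen, factorAt_succ_left, factorAt_succ_right] at hj
        exact hj.symm
      refine ⟨factorAt u (j+1) n,
        ⟨factorAt_length u (j+1) n, j+1, occursAt_self u (j+1) n⟩,
        (u j, u ((j+1)+n)), ?_, hv.symm⟩
      show IsFactor u (u j :: (factorAt u (j+1) n ++ [u ((j+1)+n)]))
      rw [← hv]
      exact ⟨j, hj⟩
    · rintro ⟨w, hw, p, hp, rfl⟩
      exact ⟨by simp [hw.1], hp⟩
  rw [key, Finset.card_biUnion]
  · refine Finset.sum_congr rfl (fun w hw => ?_)
    rw [Finset.card_image_of_injective]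
    · exact (Set.ncard_eq_toFinset_card _ (Set.toFinite _)).symm
    · intro p q hpq
      simp only [List.cons_eq_cons, List.append_cancel_left_eq, List.cons_eq_cons] at hpq
      obtain ⟨h1, h2, -⟩ := hpq
      exact Prod.ext h1 h2
  · intro w hw w' hw' hne
    simp only [Finset.disjoint_left, Finset.mem_image, Set.Finite.mem_toFinset]
    rintro v ⟨p, hp, rfl⟩ ⟨q, hq, he⟩
    have h2 := (List.cons_eq_cons.1 he).2
    have hl : w'.length = w.length := by
      rw [(mem_factorFinset.1 hw).1, (mem_factorFinset.1 hw').1]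
    exact hne ((List.append_inj h2 hl).1.symm)

lemma convexity (u : ℕ → A) (hwb : ∀ w, ¬ WeakBispecial u w) (n : ℕ) :
    (Complexity u (n+1) : ℤ) - Complexity u n ≤
      (Complexity u (n+2) : ℤ) - Complexity u (n+1) := by
  classical
  have hB : ∀ w ∈ factorFinset u n, (0:ℤ) ≤ bilateralOrder u w := by
    intro w hw
    by_contra hlt
    exact hwb w ⟨(mem_factorFinset.1 hw).2, not_le.mp hlt⟩
  have hsum : (0:ℤ) ≤ ∑ w ∈ factorFinset u n, bilateralOrder u w :=
    Finset.sum_nonneg hB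
  have hexp : ∑ w ∈ factorFinset u n, bilateralOrder u w
      = (∑ w ∈ factorFinset u n, ((extPairs u w).ncard : ℤ))
        - (∑ w ∈ factorFinset u n, ((leftExt u w).ncard : ℤ))
        - (∑ w ∈ factorFinset u n, ((rightExt u w).ncard : ℤ))
        + (factorFinset u n).card := by
    unfold bilateralOrder
    rw [Finset.sum_add_distrib, Finset.sum_sub_distrib, Finset.sum_sub_distrib,
      Finset.sum_const, nsmul_eq_mul, mul_one]
  have e1 : ((Complexity u (n+2)) : ℤ) = ∑ w ∈ factorFinset u n, ((extPairs u w).ncard : ℤ) := by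
    rw [card_pairs u n]; exact Nat.cast_sum _ _
  have e2 : ((Complexity u (n+1)) : ℤ) = ∑ w ∈ factorFinset u n, ((leftExt u w).ncard : ℤ) := by
    rw [card_left u n]; exact Nat.cast_sum _ _
  have e3 : ((Complexity u (n+1)) : ℤ) = ∑ w ∈ factorFinset u n, ((rightExt u w).ncard : ℤ) := by
    rw [card_right u n]; exact Nat.cast_sum _ _
  have e0 : ((Complexity u n) : ℤ) = ((factorFinset u n).card : ℤ) := by
    rw [complexity_eq_card u n]
  rw [hexp, ← e1, ← e2, ← e3, ← e0] at hsum
  linarith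

end Counting

lemma comp_zero (u : ℕ → A) : Complexity u 0 = 1 := by
  have hs : {w : List A | w.length = 0 ∧ IsFactor u w} = {[]} := by
    ext w
    simp only [Set.mem_setOf_eq, Set.mem_singleton_iff]
    constructor
    · rintro ⟨h1, -⟩
      exact List.length_eq_zero_iff.mp h1
    · rintro rfl
      exact ⟨rfl, 0, occursAt_nil u 0⟩
  rw [Complexity, hs, Set.ncard_singleton]

lemma returnWords_nil (u : ℕ → A) :
    returnWords u ([] : List A) = (fun a => [a]) '' Set.range u := by
  ext v
  constructor
  · rintro ⟨j, k, hjk, -, -, hbet, rfl⟩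
    have hk : k = j + 1 := by
      by_contra hne
      exact hbet (j+1) (by omega) (by omega) (occursAt_nil u _)
    subst hk
    exact ⟨u j, ⟨j, rfl⟩, by simp [factorAt, List.range_succ]⟩
  · rintro ⟨a, ⟨j, rfl⟩, rfl⟩
    exact ⟨j, j+1, by omega, occursAt_nil u j, occursAt_nil u _,
      fun l h1 h2 => absurd h1 (by omega), by simp [factorAt, List.range_succ]⟩

lemma factors_one (u : ℕ → A) :
    {w : List A | w.length = 1 ∧ IsFactor u w} = (fun a => [a]) '' Set.range u := by
  ext v
  simp only [Set.mem_setOf_eq, Set.mem_image, Set.mem_range]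
  constructor
  · rintro ⟨h1, j, hj⟩
    obtain ⟨a, rfl⟩ := List.length_eq_one_iff.mp h1
    exact ⟨a, ⟨j, (occursAt_cons.mp hj).1⟩, rfl⟩
  · rintro ⟨a, ⟨j, rfl⟩, rfl⟩
    exact ⟨rfl, j, by simp [OccursAt, factorAt, List.range_succ]⟩

lemma comp_one (u : ℕ → A) (m : ℕ) (h : PropertyR u m) : Complexity u 1 = m := by
  have hnil := h [] ⟨0, occursAt_nil u 0⟩
  rw [Complexity, factors_one, ← returnWords_nil]
  exact hnil.2

end DeltaAux

/-- If `u` satisfies `R_m` and no factor of `u` is weak bispecial, then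
`ΔC(n) = C(n+1) - C(n) ≥ m - 1` for all `n ≥ 0`. -/
theorem deltaComplexity_ge_of_propertyR [Fintype A] (u : ℕ → A) (m : ℕ)
    (h : PropertyR u m) (hwb : ∀ w, ¬ WeakBispecial u w) :
    ∀ n : ℕ, (m : ℤ) - 1 ≤ (Complexity u (n + 1) : ℤ) - (Complexity u n : ℤ) := by
  intro n
  induction n with
  | zero =>
    rw [show (0:ℕ)+1 = 1 from rfl, DeltaAux.comp_zero u, DeltaAux.comp_one u m h]
    simp
  | succ k ih =>
    exact ih.trans (DeltaAux.convexity u hwb k)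
end
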